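/- Let C be the presented group on three generators a, b, t with the two relators t⁻¹·a·t·a⁻¹·b⁻¹ and t⁻¹·b·t·a⁻¹·b⁻¹·b⁻¹ (encoding t⁻¹at = ba and t⁻¹bt = bba), and let D be the presented group on two generators a, t with the single relator t·a⁻¹·a⁻¹·t·a·t⁻¹·a⁻¹·t⁻¹·a. Then C and D are isomorphic as groups. -/

import Mathlib

/-- Relators for the mapping-torus presentation on generators
`a = of 0`, `b = of 1`, `t = of 2`: the relators
`t⁻¹·a·t·a⁻¹·b⁻¹` and `t⁻¹·b·t·a⁻¹·b⁻¹·b⁻¹`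
(encoding `t⁻¹at = ba` and `t⁻¹bt = bba`). -/
def relsC : Set (FreeGroup (Fin 3)) :=
  let a := FreeGroup.of 0
  let b := FreeGroup.of 1
  let t := FreeGroup.of 2
  {t⁻¹ * a * t * a⁻¹ * b⁻¹, t⁻¹ * b * t * a⁻¹ * b⁻¹ * b⁻¹}

/-- Relator for the two-generator presentation on `a = of 0`, `t = of 1`:
`t·a⁻¹·a⁻¹·t·a·t⁻¹·a⁻¹·t⁻¹·a`. -/
def relD : FreeGroup (Fin 2) :=
  let a := FreeGroup.of 0
  let t := FreeGroup.of 1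
  t * a⁻¹ * a⁻¹ * t * a * t⁻¹ * a⁻¹ * t⁻¹ * a

/-!
The first relator of `C` says `b = t⁻¹ a t a⁻¹`. Substituting this into the second relator
gives the conjugate of the relator of `D` by `t⁻² a`, so eliminating `b` turns one presentation
into the other.
-/

theorem PresentedGroup.lift_of_eq_one_of_mem {α : Type*} {rels : Set (FreeGroup α)}
    {r : FreeGroup α} (hr : r ∈ rels) : FreeGroup.lift (PresentedGroup.of (rels := rels)) r = 1 := by
  rw [show FreeGroup.lift PresentedGroup.of = PresentedGroup.mk rels from
    FreeGroup.ext_hom _ _ fun _ => rfl]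
  exact PresentedGroup.one_of_mem hr

namespace MappingTorus

section Relators

variable {G : Type*} [Group G]

def cRelator₁ (a b t : G) : G := t⁻¹ * a * t * a⁻¹ * b⁻¹

def cRelator₂ (a b t : G) : G := t⁻¹ * b * t * a⁻¹ * b⁻¹ * b⁻¹

def dRelator (a t : G) : G := t * a⁻¹ * a⁻¹ * t * a * t⁻¹ * a⁻¹ * t⁻¹ * a

theorem forall_lift_relsC_eq_one_iff (f : Fin 3 → G) :
    (∀ r ∈ relsC, FreeGroup.lift f r = 1) ↔
      cRelator₁ (f 0) (f 1) (f 2) = 1 ∧ cRelator₂ (f 0) (f 1) (f 2) = 1 := by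
  simp [relsC, cRelator₁, cRelator₂]

theorem forall_lift_relD_eq_one_iff (f : Fin 2 → G) :
    (∀ r ∈ ({relD} : Set (FreeGroup (Fin 2))), FreeGroup.lift f r = 1) ↔
      dRelator (f 0) (f 1) = 1 := by
  simp [relD, dRelator]

theorem cRelator₁_eq_one_iff (a b t : G) : cRelator₁ a b t = 1 ↔ b = t⁻¹ * a * t * a⁻¹ :=
  mul_inv_eq_one.trans eq_comm

theorem cRelator₂_eq_conj_dRelator (a t : G) :
    cRelator₂ a (t⁻¹ * a * t * a⁻¹) t = (t⁻¹ * t⁻¹ * a) * dRelator a t * (t⁻¹ * t⁻¹ * a)⁻¹ := by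
  simp only [cRelator₂, dRelator]
  group

theorem cRelators_eq_one_iff (a b t : G) :
    cRelator₁ a b t = 1 ∧ cRelator₂ a b t = 1 ↔ b = t⁻¹ * a * t * a⁻¹ ∧ dRelator a t = 1 := by
  rw [cRelator₁_eq_one_iff]
  refine and_congr_right fun hb => ?_
  rw [hb, cRelator₂_eq_conj_dRelator, conj_eq_one_iff]

end Relators

abbrev C := PresentedGroup relsC

abbrev D := PresentedGroup ({relD} : Set (FreeGroup (Fin 2)))

theorem cRelators_of_eq_one :
    cRelator₁ (.of 0 : C) (.of 1) (.of 2) = 1 ∧ cRelator₂ (.of 0 : C) (.of 1) (.of 2) = 1 :=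
  (forall_lift_relsC_eq_one_iff _).1 fun _ => PresentedGroup.lift_of_eq_one_of_mem

theorem dRelator_of_eq_one : dRelator (.of 0 : D) (.of 1) = 1 :=
  (forall_lift_relD_eq_one_iff _).1 fun _ => PresentedGroup.lift_of_eq_one_of_mem

theorem toD_well_defined :
    ∀ r ∈ relsC, FreeGroup.lift
      ![(.of 0 : D), (.of 1)⁻¹ * .of 0 * .of 1 * (.of 0)⁻¹, .of 1] r = 1 := by
  rw [forall_lift_relsC_eq_one_iff, cRelators_eq_one_iff]
  exact ⟨rfl, dRelator_of_eq_one⟩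

theorem toC_well_defined :
    ∀ r ∈ ({relD} : Set (FreeGroup (Fin 2))), FreeGroup.lift ![(.of 0 : C), .of 2] r = 1 := by
  rw [forall_lift_relD_eq_one_iff]
  exact ((cRelators_eq_one_iff _ _ _).1 cRelators_of_eq_one).2

noncomputable def toD : C →* D := PresentedGroup.toGroup toD_well_defined

noncomputable def toC : D →* C := PresentedGroup.toGroup toC_well_defined

end MappingTorus

open MappingTorus in
theorem stmt_3 :
    Nonempty (PresentedGroup relsC ≃*
      PresentedGroup ({relD} : Set (FreeGroup (Fin 2)))) := by
  have hb : (.of 1 : C) = (.of 2)⁻¹ * .of 0 * .of 2 * (.of 0)⁻¹ :=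
    ((cRelators_eq_one_iff _ _ _).1 cRelators_of_eq_one).1
  refine ⟨MonoidHom.toMulEquiv toD toC (PresentedGroup.ext fun i => ?_) (PresentedGroup.ext fun i => ?_)⟩
  · fin_cases i <;> simp [toD, toC, hb]
  · fin_cases i <;> simp [toD, toC]
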